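/- Sauer–Shelah bound: if a hypothesis class H over a domain X has VC dimension d, then its growth function satisfies Π_H(m) ≤ Σ_{i=0}^{d} C(m, i) for all m. -/

import Mathlib

/-- A family of subsets H shatters a finite set S if every subset of S is
    realized as an intersection h ∩ S for some h ∈ H. -/
def ShattersFam {X : Type*} (H : Set (Set X)) (S : Finset X) : Prop :=
  ∀ T ⊆ S, ∃ h ∈ H, ∀ x ∈ S, x ∈ h ↔ x ∈ T

/-!
Restricted to an `m`-element set `S`, the traces of `H` form a family of subsets of `S`. By
Pajor's form of the Sauer–Shelah lemma such a family has at most as many members as it shatters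
subsets, and every subset it shatters is shattered by `H` itself, hence has at most `d` elements.
-/

open Finset

namespace Finset

variable {α : Type*} [DecidableEq α]

theorem shatterer_subset_biUnion_powersetCard {𝒜 : Finset (Finset α)} {S : Finset α}
    (h𝒜 : 𝒜 ⊆ S.powerset) {d : ℕ} (hd : ∀ s, 𝒜.Shatters s → #s ≤ d) :
    𝒜.shatterer ⊆ (range (d + 1)).biUnion fun k ↦ S.powersetCard k := by
  intro s hs
  rw [mem_shatterer] at hs
  obtain ⟨t, ht, hst⟩ := hs.exists_superset
  simp only [mem_biUnion, mem_range, mem_powersetCard]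
  exact ⟨#s, Nat.lt_succ_of_le (hd s hs), hst.trans (mem_powerset.1 (h𝒜 ht)), rfl⟩

theorem card_le_sum_choose_of_subset_powerset {𝒜 : Finset (Finset α)} {S : Finset α}
    (h𝒜 : 𝒜 ⊆ S.powerset) {d : ℕ} (hd : ∀ s, 𝒜.Shatters s → #s ≤ d) :
    #𝒜 ≤ ∑ k ∈ range (d + 1), (#S).choose k :=
  calc #𝒜 ≤ #𝒜.shatterer := card_le_card_shatterer 𝒜
    _ ≤ #((range (d + 1)).biUnion fun k ↦ S.powersetCard k) :=
      card_le_card (shatterer_subset_biUnion_powersetCard h𝒜 hd)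
    _ ≤ ∑ k ∈ range (d + 1), #(S.powersetCard k) := card_biUnion_le
    _ = ∑ k ∈ range (d + 1), (#S).choose k := by simp only [card_powersetCard]

end Finset

section Traces

variable {X : Type*}

open Classical in
noncomputable def traces (H : Set (Set X)) (S : Finset X) : Finset (Finset X) :=
  {T ∈ S.powerset | ∃ h ∈ H, ∀ x ∈ S, x ∈ h ↔ x ∈ T}

theorem traces_subset_powerset (H : Set (Set X)) (S : Finset X) : traces H S ⊆ S.powerset := by
  classical exact filter_subset _ _

theorem coe_traces (H : Set (Set X)) (S : Finset X) :
    (traces H S : Set (Finset X)) = {T | ∃ h ∈ H, ∀ x, x ∈ T ↔ x ∈ S ∧ x ∈ h} := by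
  ext T
  simp only [traces, coe_filter, mem_powerset, Set.mem_ofPred_eq]
  constructor
  · rintro ⟨hTS, h, hH, hT⟩
    exact ⟨h, hH, fun x ↦ ⟨fun hx ↦ ⟨hTS hx, (hT x (hTS hx)).2 hx⟩, fun hx ↦ (hT x hx.1).1 hx.2⟩⟩
  · rintro ⟨h, hH, hT⟩
    exact ⟨fun x hx ↦ ((hT x).1 hx).1, h, hH, fun x hx ↦ ⟨fun hxh ↦ (hT x).2 ⟨hx, hxh⟩,
      fun hxT ↦ ((hT x).1 hxT).2⟩⟩

theorem shattersFam_of_shatters_traces [DecidableEq X] {H : Set (Set X)} {S s : Finset X}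
    (hs : (traces H S).Shatters s) : ShattersFam H s := by
  intro T hTs
  obtain ⟨u, hu, hsu⟩ := hs hTs
  obtain ⟨v, hv, hsv⟩ := hs.exists_superset
  have hsS : s ⊆ S := hsv.trans (mem_powerset.1 (traces_subset_powerset H S hv))
  simp only [traces, mem_filter] at hu
  obtain ⟨-, h, hH, hu⟩ := hu
  refine ⟨h, hH, fun x hx ↦ ?_⟩
  rw [hu x (hsS hx), ← hsu, mem_inter]
  exact ⟨fun hxu ↦ ⟨hx, hxu⟩, And.right⟩

end Traces

theorem sauer_shelah_general {X : Type*} (H : Set (Set X)) (d : ℕ)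
    (hvc : ∀ S : Finset X, ShattersFam H S → S.card ≤ d) :
    ∀ (m : ℕ) (S : Finset X), S.card = m →
      Set.ncard {T : Finset X | ∃ h ∈ H, ∀ x, x ∈ T ↔ x ∈ S ∧ x ∈ h} ≤
        ∑ i ∈ Finset.range (d + 1), m.choose i := by
  classical
  rintro m S rfl
  rw [← coe_traces, Set.ncard_coe_finset]
  exact card_le_sum_choose_of_subset_powerset (traces_subset_powerset H S)
    fun s hs ↦ hvc s (shattersFam_of_shatters_traces hs)

/-- Sauer–Shelah: if H has VC dimension d, then for every m and
    every m-element set S, the number of distinct traces of H on S is at most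
    ∑_{i=0}^{d} C(m,i). -/
theorem sauer_shelah {X : Type*} (H : Set (Set X)) (d : ℕ)
    (hshatter : ∃ S : Finset X, ShattersFam H S ∧ S.card = d)
    (hvc : ∀ S : Finset X, ShattersFam H S → S.card ≤ d) :
    ∀ (m : ℕ) (S : Finset X), S.card = m →
      Set.ncard {T : Finset X | ∃ h ∈ H, ∀ x, x ∈ T ↔ x ∈ S ∧ x ∈ h} ≤
        ∑ i ∈ Finset.range (d + 1), m.choose i :=
  sauer_shelah_general H d hvc
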